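/- arXiv:1406.0104 — 4 statements merged into one kernel-verified Lean document; each statement's English description precedes it below -/
import Mathlib

section
/- Let a > 0 and set w(x) = x·U_1'(a x) where U_1 solves x^{2−q}·U_1'' + U_1·(U_1')^q = 0 with U_1(0)=0, U_1'(0)=1, and U_1' > 0 on [0, a]. Then w satisfies the linearized equation (d/dx)[w'(x)/U_a'(x)^q] + w(x)/x^{2−q} = 0 on (0,1], where U_a(x) = U_1(a x). -/
/-!
The equation `x ^ (2 - q) * U'' + U * U' ^ q = 0` is invariant under `U ↦ U (a ·)`, so `Uₐ` is again
a solution, and `w = a⁻¹ * x * Uₐ'` is, up to the constant, the generator `x V'` of this scaling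
applied to the solution `V = Uₐ`. For a solution with `V' > 0` the equation gives
`(x V')' / V' ^ q = V' ^ (1 - q) - x ^ (q - 1) * V`, and differentiating once more, the terms
containing `V''` cancel by the equation again, leaving `-x ^ (q - 1) * V' = -x V' / x ^ (2 - q)`.
-/

open Real Set Filter Topology

def IsSolutionAt (q : ℝ) (U : ℝ → ℝ) (x : ℝ) : Prop :=
  x ^ (2 - q) * deriv (deriv U) x + U x * deriv U x ^ q = 0

lemma deriv_comp_mul_left_eq (a : ℝ) (U : ℝ → ℝ) :
    deriv (fun x => U (a * x)) = fun x => a * deriv U (a * x) :=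
  funext fun x => deriv_comp_mul_left a U x

lemma IsSolutionAt.comp_mul_left {q a x : ℝ} {U : ℝ → ℝ} (hU : IsSolutionAt q U (a * x))
    (ha : 0 < a) (hx : 0 < x) (hU' : 0 ≤ deriv U (a * x)) :
    IsSolutionAt q (fun y => U (a * y)) x := by
  have hpow : a ^ q * a ^ (2 - q) = a * a := by
    rw [← rpow_add ha, add_sub_cancel, rpow_two, sq]
  have h2 : deriv (deriv fun y => U (a * y)) x = a * (a * deriv (deriv U) (a * x)) := by
    simp only [deriv_comp_mul_left_eq, deriv_const_mul_field]
  unfold IsSolutionAt at hU ⊢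
  rw [h2, deriv_comp_mul_left_eq, mul_rpow ha.le hU']
  rw [mul_rpow ha.le hx.le] at hU
  linear_combination a ^ q * hU - x ^ (2 - q) * deriv (deriv U) (a * x) * hpow

lemma ContDiffOn.hasDerivAt_and_hasDerivAt_deriv {V : ℝ → ℝ} {s : Set ℝ} {x : ℝ}
    (hV : ContDiffOn ℝ 2 V s) (hs : IsOpen s) (hx : x ∈ s) :
    HasDerivAt V (deriv V x) x ∧ HasDerivAt (deriv V) (deriv (deriv V) x) x := by
  have hV' : ContDiffOn ℝ 1 (deriv V) s := hV.deriv_of_isOpen hs (by norm_num)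
  exact ⟨((hV.differentiableOn (by norm_num)).differentiableAt (hs.mem_nhds hx)).hasDerivAt,
    ((hV'.differentiableOn (by norm_num)).differentiableAt (hs.mem_nhds hx)).hasDerivAt⟩

section Linearization

variable {q x : ℝ} {V : ℝ → ℝ}

lemma rpow_sub_one_eq_div_rpow_two_sub (hx : 0 < x) : x ^ (q - 1) = x / x ^ (2 - q) := by
  rw [show q - 1 = 1 - (2 - q) by ring, rpow_sub hx, rpow_one]

lemma IsSolutionAt.deriv_mul_deriv_div_rpow (hode : IsSolutionAt q V x) (hx : 0 < x)
    (hV : HasDerivAt (deriv V) (deriv (deriv V) x) x) (hV' : 0 < deriv V x) :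
    deriv (fun z => z * deriv V z) x / deriv V x ^ q =
      deriv V x ^ (1 - q) - x ^ (q - 1) * V x := by
  have hg : deriv (fun z => z * deriv V z) x = deriv V x + x * deriv (deriv V) x := by
    simpa using ((hasDerivAt_id' x).fun_mul hV).deriv
  have hP := (rpow_pos_of_pos hV' q).ne'
  have hX := (rpow_pos_of_pos hx (2 - q)).ne'
  rw [hg, rpow_sub hV', rpow_one, rpow_sub_one_eq_div_rpow_two_sub hx]
  unfold IsSolutionAt at hode
  field_simp
  linear_combination x * hode

theorem mul_deriv_solves_linearized_eq (hV : ContDiffOn ℝ 2 V (Ioi 0))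
    (hode : ∀ᶠ y in 𝓝 x, IsSolutionAt q V y) (hx : 0 < x) (hV' : 0 < deriv V x) :
    deriv (fun y => deriv (fun z => z * deriv V z) y / deriv V y ^ q) x +
      x * deriv V x / x ^ (2 - q) = 0 := by
  have hpos : ∀ᶠ y in 𝓝 x, 0 < deriv V y :=
    ((hV.continuousOn_deriv_of_isOpen isOpen_Ioi (by norm_num)).continuousAt
      (Ioi_mem_nhds hx)).eventually (lt_mem_nhds hV')
  have heq : (fun y => deriv (fun z => z * deriv V z) y / deriv V y ^ q) =ᶠ[𝓝 x]
      fun y => deriv V y ^ (1 - q) - y ^ (q - 1) * V y := by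
    filter_upwards [hode, hpos, Ioi_mem_nhds hx] with y hy hy' hy0
    exact hy.deriv_mul_deriv_div_rpow hy0
      (hV.hasDerivAt_and_hasDerivAt_deriv isOpen_Ioi hy0).2 hy'
  obtain ⟨hV₁, hV₂⟩ := hV.hasDerivAt_and_hasDerivAt_deriv isOpen_Ioi hx
  have hderiv := (hV₂.rpow_const (p := 1 - q) (Or.inl hV'.ne')).fun_sub
    ((hasDerivAt_rpow_const (p := q - 1) (Or.inl hx.ne')).fun_mul hV₁)
  rw [heq.deriv_eq, hderiv.deriv]
  have hode := hode.self_of_nhds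
  unfold IsSolutionAt at hode
  have hP := (rpow_pos_of_pos hV' q).ne'
  have hX := (rpow_pos_of_pos hx (2 - q)).ne'
  rw [show 1 - q - 1 = -q by ring, rpow_neg hV'.le, show q - 1 - 1 = -(2 - q) by ring,
    rpow_neg hx.le, rpow_sub_one_eq_div_rpow_two_sub hx]
  field_simp
  linear_combination (1 - q) * hode

end Linearization

theorem linearized_equation_w_general (q : ℝ)
    (U₁ : ℝ → ℝ) (hreg : ContDiffOn ℝ 2 U₁ (Set.Ioi 0))
    (heq : ∀ x : ℝ, 0 < x →
      x ^ (2 - q) * deriv (deriv U₁) x + U₁ x * (deriv U₁ x) ^ q = 0)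
    (a : ℝ) (ha : 0 < a) (hpos : ∀ x ∈ Set.Icc (0:ℝ) a, 0 < deriv U₁ x)
    (w Uₐ : ℝ → ℝ)
    (hw : w = fun x => x * deriv U₁ (a * x))
    (hUa : Uₐ = fun x => U₁ (a * x)) :
    ∀ x ∈ Set.Ioc (0:ℝ) 1,
      deriv (fun y => deriv w y / (deriv Uₐ y) ^ q) x + w x / x ^ (2 - q) = 0 := by
  rintro x ⟨hx, hx1⟩
  have hmaps : MapsTo (a * ·) (Ioi 0) (Ioi (0 : ℝ)) := fun y hy => mul_pos ha hy
  have hUa_reg : ContDiffOn ℝ 2 Uₐ (Ioi 0) :=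
    hUa ▸ hreg.comp (contDiff_const.mul contDiff_id).contDiffOn hmaps
  have hUa' : deriv Uₐ = fun y => a * deriv U₁ (a * y) := hUa ▸ deriv_comp_mul_left_eq a U₁
  have hw_eq : w = fun y => a⁻¹ * (y * deriv Uₐ y) := by
    rw [hw, hUa']
    ext y
    field_simp
  have hcont : ContinuousAt (fun y => deriv U₁ (a * y)) x :=
    ((hreg.continuousOn_deriv_of_isOpen isOpen_Ioi (by norm_num)).continuousAt
      (Ioi_mem_nhds (mul_pos ha hx))).comp (continuous_const_mul a).continuousAt
  have hU₁' : 0 < deriv U₁ (a * x) := hpos _ ⟨(mul_pos ha hx).le, by nlinarith⟩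
  have hode : ∀ᶠ y in 𝓝 x, IsSolutionAt q Uₐ y := by
    filter_upwards [hcont.eventually (lt_mem_nhds hU₁'), Ioi_mem_nhds hx] with y hy hy0
    exact hUa ▸ IsSolutionAt.comp_mul_left (heq _ (mul_pos ha hy0)) ha hy0 hy.le
  have hlin := mul_deriv_solves_linearized_eq hUa_reg hode hx (by rw [hUa']; positivity)
  simp only [hw_eq, deriv_const_mul_field', mul_div_assoc]
  linear_combination a⁻¹ * hlin

theorem linearized_equation_w (q : ℝ) (hq0 : 0 < q) (hq1 : q ≤ 1)
    (U₁ : ℝ → ℝ) (hreg : ContDiffOn ℝ 2 U₁ (Set.Ioi 0))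
    (heq : ∀ x : ℝ, 0 < x →
      x ^ (2 - q) * deriv (deriv U₁) x + U₁ x * (deriv U₁ x) ^ q = 0)
    (h0 : U₁ 0 = 0) (h0' : deriv U₁ 0 = 1)
    (a : ℝ) (ha : 0 < a) (hpos : ∀ x ∈ Set.Icc (0:ℝ) a, 0 < deriv U₁ x)
    (w Uₐ : ℝ → ℝ)
    (hw : w = fun x => x * deriv U₁ (a * x))
    (hUa : Uₐ = fun x => U₁ (a * x)) :
    ∀ x ∈ Set.Ioc (0:ℝ) 1,
      deriv (fun y => deriv w y / (deriv Uₐ y) ^ q) x + w x / x ^ (2 - q) = 0 :=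
  linearized_equation_w_general q U₁ hreg heq a ha hpos w Uₐ hw hUa
end

section
/- Let q ∈ (0,1], p continuous and positive on [0,1], and suppose w ∈ C¹([0,1]) ∩ C²((0,1]) satisfies w > 0 on (0,1], w(1) > 0, and (p·w')' + w/x^{2−q} = 0 on (0,1]. If h ∈ H¹₀(0,1) satisfies ∫₀¹ p·(h')² = ∫₀¹ h²/x^{2−q}, then h = 0. -/
/-!
With `P = p w'`, Picone's identity
`(P h² / w)' = p h'² - h² / x^(2-q) - p (h' - (w'/w) h)²`
holds on `(0, 1]`. Integrating it over `[ε, 1]` and letting `ε → 0`, the boundary term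
`P(ε) h(ε)² / w(ε)` has nonpositive upper limit: if `w'(0) ≤ 0` then `P ≤ 0`, because
`P` is decreasing with `P(0+) = p(0) w'(0)`; if `w'(0) > 0` then `w(ε) ≥ c ε`, while
`h(ε)² = o(ε)` by Cauchy–Schwarz. So equality in the Hardy inequality forces
`p (h' - (w'/w) h)² = 0` a.e., i.e. `(h / w)' = 0` a.e., and `h / w` is the constant
`h(1) / w(1) = 0`.
-/

open Real Set MeasureTheory Filter Topology

theorem sq_intervalIntegral_le {f : ℝ → ℝ} {a b : ℝ} (hab : a ≤ b)
    (hf : IntervalIntegrable f volume a b)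
    (hf2 : IntervalIntegrable (fun x => f x ^ 2) volume a b) :
    (∫ x in a..b, f x) ^ 2 ≤ (b - a) * ∫ x in a..b, f x ^ 2 := by
  have hquad : ∀ t : ℝ,
      0 ≤ (b - a) * (t * t) + (-2 * ∫ x in a..b, f x) * t + ∫ x in a..b, f x ^ 2 := by
    intro t
    have hexpand : ∀ x, (f x - t) ^ 2 = f x ^ 2 - (2 * t) * f x + t * t := fun x => by ring
    have hnonneg : 0 ≤ ∫ x in a..b, (f x - t) ^ 2 :=
      intervalIntegral.integral_nonneg hab fun x _ => sq_nonneg _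
    simp only [hexpand] at hnonneg
    rw [intervalIntegral.integral_add (hf2.sub (hf.const_mul _)) intervalIntegrable_const,
      intervalIntegral.integral_sub hf2 (hf.const_mul _), intervalIntegral.integral_const_mul,
      intervalIntegral.integral_const, smul_eq_mul] at hnonneg
    linarith
  have := discrim_le_zero hquad
  rw [discrim] at this
  linarith

theorem aestronglyMeasurable_of_hasDerivAt {h g : ℝ → ℝ} {s : Set ℝ} (hs : MeasurableSet s)
    (hd : ∀ x ∈ s, HasDerivAt h (g x) x) : AEStronglyMeasurable g (volume.restrict s) :=
  (measurable_deriv h).aestronglyMeasurable.congr <| by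
    filter_upwards [ae_restrict_mem hs] with x hx using (hd x hx).deriv

theorem IntervalIntegrable.of_sq {g : ℝ → ℝ} {a b : ℝ} (hab : a ≤ b)
    (hg : AEStronglyMeasurable g (volume.restrict (Ioc a b)))
    (hg2 : IntervalIntegrable (fun x => g x ^ 2) volume a b) :
    IntervalIntegrable g volume a b := by
  rw [intervalIntegrable_iff_integrableOn_Ioc_of_le hab] at hg2 ⊢
  exact ((memLp_two_iff_integrable_sq hg).2 hg2).integrable one_le_two

theorem tendsto_sq_div_sub_nhdsGT {h g : ℝ → ℝ} {a b : ℝ} (hab : a < b) (ha : h a = 0)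
    (hd : ∀ x ∈ Icc a b, HasDerivAt h (g x) x) (hg : IntervalIntegrable g volume a b)
    (hg2 : IntervalIntegrable (fun x => g x ^ 2) volume a b) :
    Tendsto (fun x => h x ^ 2 / (x - a)) (𝓝[>] a) (𝓝 0) := by
  have hIcc : Icc a b ∈ 𝓝[>] a := Icc_mem_nhdsGT hab
  have hR : Tendsto (fun x => ∫ t in a..x, g t ^ 2) (𝓝[>] a) (𝓝 0) := by
    have := intervalIntegral.continuousOn_primitive_interval' hg2 left_mem_uIcc a left_mem_uIcc
    rw [uIcc_of_le hab.le] at this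
    simpa using this.tendsto.mono_left (nhdsWithin_le_of_mem hIcc)
  refine tendsto_of_tendsto_of_tendsto_of_le_of_le' tendsto_const_nhds hR ?_ ?_
  · filter_upwards [self_mem_nhdsWithin] with x (hx : a < x)
    exact div_nonneg (sq_nonneg _) (sub_pos.2 hx).le
  · filter_upwards [self_mem_nhdsWithin, hIcc] with x (hx : a < x) hxb
    have hsub : uIcc a x ⊆ uIcc a b := uIcc_subset_uIcc_left (by rwa [uIcc_of_le hab.le])
    have hftc : ∫ t in a..x, g t = h x := by
      rw [intervalIntegral.integral_eq_sub_of_hasDerivAt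
        (fun t ht => hd t (by rw [uIcc_of_le hx.le] at ht; exact ⟨ht.1, ht.2.trans hxb.2⟩))
        (hg.mono_set hsub), ha, sub_zero]
    rw [div_le_iff₀ (sub_pos.2 hx), ← hftc, mul_comm]
    exact sq_intervalIntegral_le hx.le (hg.mono_set hsub) (hg2.mono_set hsub)

theorem IntervalIntegrable.mul_sq_sub {p g r : ℝ → ℝ} {a b : ℝ}
    (hp : ContinuousOn p (uIcc a b)) (hr : ContinuousOn r (uIcc a b))
    (hg : IntervalIntegrable g volume a b)
    (hg2 : IntervalIntegrable (fun x => g x ^ 2) volume a b) :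
    IntervalIntegrable (fun x => p x * (g x - r x) ^ 2) volume a b := by
  have hexpand : (fun x => p x * (g x - r x) ^ 2) =
      fun x => p x * g x ^ 2 - (2 * p x * r x) * g x + p x * r x ^ 2 := by
    funext x; ring
  rw [hexpand]
  exact ((hg2.continuousOn_mul hp).sub
    (hg.continuousOn_mul ((continuousOn_const.mul hp).mul hr))).add
      (hp.mul (hr.pow 2)).intervalIntegrable

theorem hasDerivAt_picone {w h P : ℝ → ℝ} {p w' g P' x : ℝ} (hw : HasDerivAt w w' x)
    (hh : HasDerivAt h g x) (hP : HasDerivAt P P' x) (hPx : P x = p * w') (hwx : w x ≠ 0) :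
    HasDerivAt (fun y => P y * h y ^ 2 / w y)
      (P' * h x ^ 2 / w x + p * g ^ 2 - p * (g - w' / w x * h x) ^ 2) x := by
  refine ((hP.mul (hh.pow 2)).div hw hwx).congr_deriv ?_
  simp only [Pi.mul_apply, Pi.pow_apply, hPx]
  field_simp
  ring

theorem integral_picone {p w w' h g P ρ : ℝ → ℝ} {a b : ℝ} (hab : a ≤ b)
    (hPc : ContinuousOn P (Icc a b)) (hhc : ContinuousOn h (Icc a b))
    (hwc : ContinuousOn w (Icc a b)) (hw0 : ∀ x ∈ Icc a b, w x ≠ 0)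
    (hP : ∀ x ∈ Ioo a b, HasDerivAt P (-(w x / ρ x)) x)
    (hw : ∀ x ∈ Ioo a b, HasDerivAt w (w' x) x) (hh : ∀ x ∈ Ioo a b, HasDerivAt h (g x) x)
    (hPw : ∀ x ∈ Ioo a b, P x = p x * w' x)
    (hpg : IntervalIntegrable (fun x => p x * g x ^ 2) volume a b)
    (hhρ : IntervalIntegrable (fun x => h x ^ 2 / ρ x) volume a b)
    (hQ : IntervalIntegrable (fun x => p x * (g x - w' x / w x * h x) ^ 2) volume a b) :
    ∫ x in a..b, p x * (g x - w' x / w x * h x) ^ 2 =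
      (∫ x in a..b, p x * g x ^ 2) - (∫ x in a..b, h x ^ 2 / ρ x)
        + P a * h a ^ 2 / w a - P b * h b ^ 2 / w b := by
  have hderiv : ∀ x ∈ Ioo a b, HasDerivAt (fun y => P y * h y ^ 2 / w y)
      (p x * g x ^ 2 - h x ^ 2 / ρ x - p x * (g x - w' x / w x * h x) ^ 2) x := by
    intro x hx
    have hwx := hw0 x (Ioo_subset_Icc_self hx)
    convert hasDerivAt_picone (hw x hx) (hh x hx) (hP x hx) (hPw x hx) hwx using 1
    field_simp
    ring
  have hFc : ContinuousOn (fun y => P y * h y ^ 2 / w y) (Icc a b) :=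
    (hPc.mul (hhc.pow 2)).div hwc hw0
  have hftc := intervalIntegral.integral_eq_sub_of_hasDeriv_right_of_le hab hFc
    (fun x hx => (hderiv x hx).hasDerivWithinAt) ((hpg.sub hhρ).sub hQ)
  rw [intervalIntegral.integral_sub (hpg.sub hhρ) hQ, intervalIntegral.integral_sub hpg hhρ]
    at hftc
  linarith

theorem eq_of_hasDerivAt_of_ae_eq_zero {f f' : ℝ → ℝ} {a b : ℝ} (hab : a ≤ b)
    (hf : ContinuousOn f (Icc a b)) (hd : ∀ x ∈ Ioo a b, HasDerivAt f (f' x) x)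
    (h0 : f' =ᵐ[volume.restrict (Ioc a b)] 0) : f a = f b := by
  have hint : IntervalIntegrable f' volume a b := by
    rw [intervalIntegrable_iff_integrableOn_Ioc_of_le hab]
    exact (integrable_zero _ _ _).congr h0.symm
  have hftc := intervalIntegral.integral_eq_sub_of_hasDeriv_right_of_le hab hf
    (fun x hx => (hd x hx).hasDerivWithinAt) hint
  rw [intervalIntegral.integral_of_le hab, integral_eq_zero_of_ae h0] at hftc
  linarith

theorem div_eq_div_of_ae_eq_logDeriv_mul {h g w w' : ℝ → ℝ} {a b : ℝ} (hab : a ≤ b)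
    (hh : ContinuousOn h (Icc a b)) (hw : ContinuousOn w (Icc a b))
    (hw0 : ∀ x ∈ Icc a b, w x ≠ 0) (hhd : ∀ x ∈ Ioo a b, HasDerivAt h (g x) x)
    (hwd : ∀ x ∈ Ioo a b, HasDerivAt w (w' x) x)
    (hae : ∀ᵐ x ∂(volume.restrict (Ioc a b)), g x = w' x / w x * h x) :
    h a / w a = h b / w b := by
  refine eq_of_hasDerivAt_of_ae_eq_zero hab (hh.div hw hw0)
    (fun x hx => (hhd x hx).div (hwd x hx) (hw0 x (Ioo_subset_Icc_self hx))) ?_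
  filter_upwards [hae, ae_restrict_mem measurableSet_Ioc] with x hgx hx
  have := hw0 x (Ioc_subset_Icc_self hx)
  rw [hgx, Pi.zero_apply]
  field_simp
  ring

theorem tendsto_intervalIntegral_nhdsGT {f : ℝ → ℝ} {a b : ℝ} (hab : a < b)
    (hf : IntervalIntegrable f volume a b) :
    Tendsto (fun ε => ∫ x in ε..b, f x) (𝓝[>] a) (𝓝 (∫ x in a..b, f x)) := by
  have hcont := intervalIntegral.continuousOn_primitive_interval_left
    ((intervalIntegrable_iff' (f := f)).1 hf) a left_mem_uIcc
  rw [uIcc_of_le hab.le] at hcont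
  exact hcont.tendsto.mono_left (nhdsWithin_le_of_mem (Icc_mem_nhdsGT hab))

theorem integrableOn_Ioc_of_nonneg_of_eventually_integral_le {f : ℝ → ℝ} {a b C : ℝ}
    (hab : a < b) (hf0 : ∀ x ∈ Ioc a b, 0 ≤ f x)
    (hfi : ∀ ε ∈ Ioo a b, IntervalIntegrable f volume ε b)
    (hC : ∀ᶠ ε in 𝓝[>] a, ∫ x in ε..b, f x ≤ C) : IntegrableOn f (Ioc a b) := by
  classical
  let a' : ℝ → ℝ := fun ε => if ε ∈ Ioo a b then ε else b
  have hev : ∀ᶠ ε in 𝓝[>] a, a' ε = ε := by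
    filter_upwards [Ioo_mem_nhdsGT hab] with ε hε using if_pos hε
  refine integrableOn_Ioc_of_intervalIntegral_norm_bounded_left (a := a') (I := C) ?_
    ((tendsto_id.mono_left nhdsWithin_le_nhds).congr' (hev.mono fun _ h => h.symm)) ?_
  · intro ε
    by_cases hε : ε ∈ Ioo a b
    · simp only [a', if_pos hε]
      exact (intervalIntegrable_iff_integrableOn_Ioc_of_le hε.2.le).1 (hfi ε hε)
    · simp only [a', if_neg hε, Ioc_self, integrableOn_empty]
  · filter_upwards [Ioo_mem_nhdsGT hab, hev, hC] with ε hε hεa hCε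
    rwa [hεa, setIntegral_congr_fun measurableSet_Ioc fun x hx =>
      Real.norm_of_nonneg (hf0 x ⟨hε.1.trans hx.1, hx.2⟩),
      ← intervalIntegral.integral_of_le hε.2.le]

theorem ae_eq_zero_of_forall_integral_eq {f X Q F G : ℝ → ℝ} {a b : ℝ} (hab : a < b)
    (hf : IntervalIntegrable f volume a b)
    (hX0 : ∀ x ∈ Ioc a b, 0 ≤ X x) (hQ0 : ∀ x ∈ Ioc a b, 0 ≤ Q x)
    (hXi : ∀ ε ∈ Ioo a b, IntervalIntegrable X volume ε b)
    (hQi : ∀ ε ∈ Ioo a b, IntervalIntegrable Q volume ε b)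
    (hid : ∀ ε ∈ Ioo a b,
      ∫ x in ε..b, Q x = (∫ x in ε..b, f x) - (∫ x in ε..b, X x) + F ε)
    (hFG : ∀ᶠ ε in 𝓝[>] a, F ε ≤ G ε) (hG : Tendsto G (𝓝[>] a) (𝓝 0))
    (heq : ∫ x in a..b, f x = ∫ x in a..b, X x) :
    Q =ᵐ[volume.restrict (Ioc a b)] 0 := by
  have hfl := tendsto_intervalIntegral_nhdsGT hab hf
  have hnonneg : ∀ {Y : ℝ → ℝ}, (∀ x ∈ Ioc a b, 0 ≤ Y x) →
      ∀ ε ∈ Ioo a b, 0 ≤ ∫ x in ε..b, Y x := fun hY ε hε =>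
    intervalIntegral.integral_nonneg hε.2.le fun x hx => hY x ⟨hε.1.trans_le hx.1, hx.2⟩
  have hbound : ∀ᶠ ε in 𝓝[>] a,
      ε ∈ Ioo a b ∧ F ε ≤ 1 ∧ ∫ x in ε..b, f x ≤ (∫ x in a..b, f x) + 1 := by
    filter_upwards [Ioo_mem_nhdsGT hab, hFG, hG.eventually (eventually_le_nhds one_pos),
      hfl.eventually (eventually_le_nhds (lt_add_one _))] with ε hε hFε hGε hfε
    exact ⟨hε, hFε.trans hGε, hfε⟩
  -- `heq` only carries information once `X` is known to be integrable on `(a, b]`.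
  have hXint : IntegrableOn X (Ioc a b) :=
    integrableOn_Ioc_of_nonneg_of_eventually_integral_le (C := (∫ x in a..b, f x) + 2)
      hab hX0 hXi <| by
      filter_upwards [hbound] with ε ⟨hε, hFε, hfε⟩
      linarith [hid ε hε, hnonneg hQ0 ε hε]
  have hQint : IntegrableOn Q (Ioc a b) :=
    integrableOn_Ioc_of_nonneg_of_eventually_integral_le (C := (∫ x in a..b, f x) + 2)
      hab hQ0 hQi <| by
      filter_upwards [hbound] with ε ⟨hε, hFε, hfε⟩
      linarith [hid ε hε, hnonneg hX0 ε hε]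
  have hXl := tendsto_intervalIntegral_nhdsGT hab
    ((intervalIntegrable_iff_integrableOn_Ioc_of_le hab.le).2 hXint)
  have hQl := tendsto_intervalIntegral_nhdsGT hab
    ((intervalIntegrable_iff_integrableOn_Ioc_of_le hab.le).2 hQint)
  have hQle : ∫ x in a..b, Q x ≤ 0 := by
    have hlim := (hfl.sub hXl).add hG
    rw [heq, sub_self, add_zero] at hlim
    refine le_of_tendsto_of_tendsto hQl hlim ?_
    filter_upwards [Ioo_mem_nhdsGT hab, hFG] with ε hε hFε
    rw [hid ε hε]
    linarith
  rw [intervalIntegral.integral_of_le hab.le] at hQle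
  refine (integral_eq_zero_iff_of_nonneg_ae ?_ hQint).1
    (le_antisymm hQle (setIntegral_nonneg measurableSet_Ioc hQ0))
  filter_upwards [ae_restrict_mem measurableSet_Ioc] with x hx using hQ0 x hx

theorem AntitoneOn.le_of_tendsto_nhdsGT {P : ℝ → ℝ} {a b L : ℝ}
    (hP : AntitoneOn P (Ioc a b)) (hL : Tendsto P (𝓝[>] a) (𝓝 L)) :
    ∀ x ∈ Ioc a b, P x ≤ L := fun x hx =>
  ge_of_tendsto hL <| by
    filter_upwards [Ioo_mem_nhdsGT hx.1] with y hy
    exact hP ⟨hy.1, hy.2.le.trans hx.2⟩ hx hy.2.le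

theorem exists_eventually_div_le_div {P w : ℝ → ℝ} {b d L : ℝ} (hb : 0 < b)
    (hw : ∀ x ∈ Ioc 0 b, 0 < w x) (hwd : HasDerivWithinAt w d (Ioi 0) 0)
    (hP : ∀ x ∈ Ioc 0 b, P x ≤ L) (hLd : d ≤ 0 → L ≤ 0) :
    ∃ K, ∀ᶠ x in 𝓝[>] 0, P x / w x ≤ K / x := by
  have hIoc : Ioc 0 b ∈ 𝓝[>] (0 : ℝ) := Ioc_mem_nhdsGT hb
  rcases le_or_gt d 0 with hd | hd
  · refine ⟨0, ?_⟩
    filter_upwards [hIoc] with x hx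
    rw [zero_div]
    exact div_nonpos_of_nonpos_of_nonneg ((hP x hx).trans (hLd hd)) (hw x hx).le
  have hw0 : 0 ≤ w 0 := ge_of_tendsto hwd.continuousWithinAt.tendsto <| by
    filter_upwards [hIoc] with x hx using (hw x hx).le
  have hslope : Tendsto (slope w 0) (𝓝[>] 0) (𝓝 d) := by
    simpa using hasDerivWithinAt_iff_tendsto_slope.1 hwd
  refine ⟨2 * max L 0 / d, ?_⟩
  filter_upwards [hIoc, hslope.eventually (eventually_gt_nhds (half_lt_self hd))]
    with x hx hsx
  have hwx : d / 2 * x ≤ w x := by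
    rw [slope_def_field, sub_zero, lt_div_iff₀ hx.1] at hsx
    linarith
  calc P x / w x ≤ max L 0 / w x :=
        div_le_div_of_nonneg_right (le_max_of_le_left (hP x hx)) (hw x hx).le
    _ ≤ max L 0 / (d / 2 * x) :=
        div_le_div_of_nonneg_left (le_max_right _ _) (by have := hx.1; positivity) hwx
    _ = 2 * max L 0 / d / x := by field_simp

theorem hasDerivAt_neg_of_deriv_add_eq_zero {f : ℝ → ℝ} {x c : ℝ} (hf : deriv f x + c = 0)
    (hc : c ≠ 0) : HasDerivAt f (-c) x := by
  have hfx : deriv f x = -c := eq_neg_of_add_eq_zero_left hf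
  exact hfx ▸ (differentiableAt_of_deriv_ne_zero (hfx ▸ neg_ne_zero.2 hc)).hasDerivAt

theorem ContDiffOn.hasDerivAt_of_mem_Ioo {w : ℝ → ℝ} {a b x : ℝ}
    (hw : ContDiffOn ℝ 1 w (Icc a b)) (hx : x ∈ Ioo a b) : HasDerivAt w (deriv w x) x :=
  ((hw.differentiableOn one_ne_zero x (Ioo_subset_Icc_self hx)).differentiableAt
    (Icc_mem_nhds hx.1 hx.2)).hasDerivAt

theorem exists_eventually_mul_deriv_div_le {p w ρ : ℝ → ℝ} (hp : ContinuousOn p (Icc 0 1))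
    (hp0 : 0 < p 0) (hw : ContDiffOn ℝ 1 w (Icc 0 1)) (hwpos : ∀ x ∈ Ioc 0 1, 0 < w x)
    (hρ : ∀ x ∈ Ioc 0 1, 0 < ρ x)
    (hP : ∀ x ∈ Ioc 0 1, HasDerivAt (fun y => p y * deriv w y) (-(w x / ρ x)) x) :
    ∃ K, ∀ᶠ x in 𝓝[>] 0, p x * deriv w x / w x ≤ K / x := by
  set d := derivWithin w (Icc 0 1) 0
  have hIcc : Icc (0 : ℝ) 1 ∈ 𝓝[>] 0 := Icc_mem_nhdsGT one_pos
  have hwd : HasDerivWithinAt w d (Ioi 0) 0 :=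
    ((hw.differentiableOn one_ne_zero 0 (left_mem_Icc.2 zero_le_one)).hasDerivWithinAt
      ).mono_of_mem_nhdsWithin hIcc
  have hlim : Tendsto (fun y => p y * deriv w y) (𝓝[>] 0) (𝓝 (p 0 * d)) := by
    have h0 : (0 : ℝ) ∈ Icc 0 1 := left_mem_Icc.2 zero_le_one
    have hcont := (hp 0 h0).mul
      (hw.continuousOn_derivWithin (uniqueDiffOn_Icc one_pos) le_rfl 0 h0)
    refine (hcont.tendsto.mono_left (nhdsWithin_le_of_mem hIcc)).congr' ?_
    filter_upwards [Ioo_mem_nhdsGT one_pos] with x hx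
    rw [Pi.mul_apply, derivWithin_of_mem_nhds (Icc_mem_nhds hx.1 hx.2)]
  have hanti : AntitoneOn (fun y => p y * deriv w y) (Ioc 0 1) := by
    refine antitoneOn_of_hasDerivWithinAt_nonpos (convex_Ioc 0 1)
      (fun x hx => (hP x hx).continuousAt.continuousWithinAt)
      (fun x hx => (hP x (interior_subset hx)).hasDerivWithinAt) fun x hx => ?_
    have hx' := interior_subset hx
    exact neg_nonpos.2 (div_pos (hwpos x hx') (hρ x hx')).le
  exact exists_eventually_div_le_div one_pos hwpos hwd (hanti.le_of_tendsto_nhdsGT hlim)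
    fun hd => mul_nonpos_of_nonneg_of_nonpos hp0.le hd

theorem hardy_picone_identity {p w ρ h g : ℝ → ℝ} (hp : ContinuousOn p (Icc 0 1))
    (hppos : ∀ x ∈ Icc (0 : ℝ) 1, 0 < p x) (hw : ContDiffOn ℝ 1 w (Icc 0 1))
    (hwpos : ∀ x ∈ Ioc (0 : ℝ) 1, 0 < w x) (hρ : ContinuousOn ρ (Ioc 0 1))
    (hρpos : ∀ x ∈ Ioc (0 : ℝ) 1, 0 < ρ x)
    (hP : ∀ x ∈ Ioc (0 : ℝ) 1, HasDerivAt (fun y => p y * deriv w y) (-(w x / ρ x)) x)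
    (hd : ∀ x ∈ Icc (0 : ℝ) 1, HasDerivAt h (g x) x) (h1 : h 1 = 0)
    (hg : IntervalIntegrable g volume 0 1)
    (hg2 : IntervalIntegrable (fun x => g x ^ 2) volume 0 1) {ε : ℝ} (hε : ε ∈ Ioo 0 1) :
    IntervalIntegrable (fun x => h x ^ 2 / ρ x) volume ε 1 ∧
    IntervalIntegrable (fun x => p x * (g x - deriv w x / w x * h x) ^ 2) volume ε 1 ∧
    ∫ x in ε..1, p x * (g x - deriv w x / w x * h x) ^ 2 =
      (∫ x in ε..1, p x * g x ^ 2) - (∫ x in ε..1, h x ^ 2 / ρ x)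
        + p ε * deriv w ε * h ε ^ 2 / w ε := by
  have hsub : Icc ε 1 ⊆ Ioc 0 1 := fun x hx => ⟨hε.1.trans_le hx.1, hx.2⟩
  have hsub' : Icc ε 1 ⊆ Icc 0 1 := hsub.trans Ioc_subset_Icc_self
  have hmono : uIcc ε 1 ⊆ uIcc 0 1 := by
    rw [uIcc_of_le hε.2.le, uIcc_of_le zero_le_one]; exact hsub'
  have hp0 : ∀ x ∈ Icc ε 1, p x ≠ 0 := fun x hx => (hppos x (hsub' hx)).ne'
  have hw0 : ∀ x ∈ Icc ε 1, w x ≠ 0 := fun x hx => (hwpos x (hsub hx)).ne'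
  have hpc : ContinuousOn p (Icc ε 1) := hp.mono hsub'
  have hwc : ContinuousOn w (Icc ε 1) := hw.continuousOn.mono hsub'
  have hhc : ContinuousOn h (Icc ε 1) := fun x hx =>
    (hd x (hsub' hx)).continuousAt.continuousWithinAt
  have hPc : ContinuousOn (fun y => p y * deriv w y) (Icc ε 1) := fun x hx =>
    (hP x (hsub hx)).continuousAt.continuousWithinAt
  have hw'c : ContinuousOn (deriv w) (Icc ε 1) :=
    (hPc.div hpc hp0).congr fun x hx => by rw [Pi.div_apply, mul_div_cancel_left₀ _ (hp0 x hx)]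
  have hX : IntervalIntegrable (fun x => h x ^ 2 / ρ x) volume ε 1 := by
    refine ContinuousOn.intervalIntegrable ?_
    rw [uIcc_of_le hε.2.le]
    exact (hhc.pow 2).div (hρ.mono hsub) fun x hx => (hρpos x (hsub hx)).ne'
  have hQ :
      IntervalIntegrable (fun x => p x * (g x - deriv w x / w x * h x) ^ 2) volume ε 1 := by
    rw [← uIcc_of_le hε.2.le] at hpc hwc hhc hw'c hw0
    exact (hg.mono_set hmono).mul_sq_sub hpc ((hw'c.div hwc hw0).mul hhc) (hg2.mono_set hmono)
  refine ⟨hX, hQ, ?_⟩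
  rw [integral_picone hε.2.le hPc hhc hwc hw0 (fun x hx => hP x (hsub (Ioo_subset_Icc_self hx)))
    (fun x hx => hw.hasDerivAt_of_mem_Ioo ⟨hε.1.trans hx.1, hx.2⟩)
    (fun x hx => hd x (hsub' (Ioo_subset_Icc_self hx))) (fun _ _ => rfl)
    ((hg2.mono_set hmono).continuousOn_mul (by rwa [uIcc_of_le hε.2.le])) hX hQ, h1]
  ring

theorem eq_zero_of_ae_picone_remainder_eq_zero {p w h g : ℝ → ℝ}
    (hppos : ∀ x ∈ Icc (0 : ℝ) 1, 0 < p x) (hw : ContDiffOn ℝ 1 w (Icc 0 1))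
    (hwpos : ∀ x ∈ Ioc (0 : ℝ) 1, 0 < w x) (hd : ∀ x ∈ Icc (0 : ℝ) 1, HasDerivAt h (g x) x)
    (h1 : h 1 = 0)
    (hQ : (fun x => p x * (g x - deriv w x / w x * h x) ^ 2) =ᵐ[volume.restrict (Ioc 0 1)] 0) :
    ∀ x ∈ Ioc (0 : ℝ) 1, h x = 0 := by
  intro x hx
  have hsub : Icc x 1 ⊆ Ioc 0 1 := fun y hy => ⟨hx.1.trans_le hy.1, hy.2⟩
  have hw0 : ∀ y ∈ Icc x 1, w y ≠ 0 := fun y hy => (hwpos y (hsub hy)).ne'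
  have hconst := div_eq_div_of_ae_eq_logDeriv_mul hx.2
    (fun y hy => (hd y (Ioc_subset_Icc_self (hsub hy))).continuousAt.continuousWithinAt)
    (hw.continuousOn.mono (hsub.trans Ioc_subset_Icc_self)) hw0
    (fun y hy => hd y (Ioc_subset_Icc_self (hsub (Ioo_subset_Icc_self hy))))
    (fun y hy => hw.hasDerivAt_of_mem_Ioo ⟨hx.1.trans hy.1, hy.2⟩) ?_
  · rw [h1, zero_div, div_eq_zero_iff] at hconst
    exact hconst.resolve_right (hw0 x (left_mem_Icc.2 hx.2))
  filter_upwards [ae_restrict_of_ae_restrict_of_subset (Ioc_subset_Ioc_left hx.1.le) hQ,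
    ae_restrict_mem measurableSet_Ioc] with y hQy hy
  have hpy := (hppos y (Ioc_subset_Icc_self (hsub (Ioc_subset_Icc_self hy)))).ne'
  rw [Pi.zero_apply, mul_eq_zero, or_iff_right hpy, sq_eq_zero_iff, sub_eq_zero] at hQy
  exact hQy

theorem equality_case_hardy_general (q : ℝ)
    (p w : ℝ → ℝ)
    (hp : ContinuousOn p (Set.Icc 0 1))
    (hppos : ∀ x ∈ Set.Icc (0:ℝ) 1, 0 < p x)
    (hw1 : ContDiffOn ℝ 1 w (Set.Icc 0 1))
    (hwpos : ∀ x ∈ Set.Ioc (0:ℝ) 1, 0 < w x)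
    (heqw : ∀ x ∈ Set.Ioc (0:ℝ) 1,
      deriv (fun y => p y * deriv w y) x + w x / x ^ (2 - q) = 0)
    (h g : ℝ → ℝ) (h0 : h 0 = 0) (h1 : h 1 = 0)
    (hd : ∀ x ∈ Set.Icc (0:ℝ) 1, HasDerivAt h (g x) x)
    (hg : IntervalIntegrable (fun x => g x ^ 2) volume 0 1)
    (heq : (∫ x in (0:ℝ)..1, p x * g x ^ 2)
      = ∫ x in (0:ℝ)..1, h x ^ 2 / x ^ (2 - q)) :
    ∀ x ∈ Set.Icc (0:ℝ) 1, h x = 0 := by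
  have hρ : ∀ x ∈ Ioc (0 : ℝ) 1, 0 < x ^ (2 - q) := fun x hx => rpow_pos_of_pos hx.1 _
  have hP : ∀ x ∈ Ioc (0 : ℝ) 1,
      HasDerivAt (fun y => p y * deriv w y) (-(w x / x ^ (2 - q))) x := fun x hx =>
    hasDerivAt_neg_of_deriv_add_eq_zero (heqw x hx) (div_pos (hwpos x hx) (hρ x hx)).ne'
  have hgi : IntervalIntegrable g volume 0 1 := hg.of_sq zero_le_one <|
    aestronglyMeasurable_of_hasDerivAt measurableSet_Ioc fun x hx =>
      hd x (Ioc_subset_Icc_self hx)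
  have hpic := fun ε (hε : ε ∈ Ioo (0 : ℝ) 1) => hardy_picone_identity hp hppos hw1 hwpos
    (fun x hx => (continuousAt_rpow_const _ _ (.inl hx.1.ne')).continuousWithinAt) hρ hP hd h1
    hgi hg hε
  obtain ⟨K, hK⟩ := exists_eventually_mul_deriv_div_le hp (hppos 0 (left_mem_Icc.2 zero_le_one))
    hw1 hwpos hρ hP
  have hsq := tendsto_sq_div_sub_nhdsGT zero_lt_one h0 hd hgi hg
  simp only [sub_zero] at hsq
  have hQ := ae_eq_zero_of_forall_integral_eq zero_lt_one
    (hg.continuousOn_mul (by rwa [uIcc_of_le zero_le_one]))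
    (fun x hx => div_nonneg (sq_nonneg _) (hρ x hx).le)
    (fun x hx => mul_nonneg (hppos x (Ioc_subset_Icc_self hx)).le (sq_nonneg _))
    (fun ε hε => (hpic ε hε).1) (fun ε hε => (hpic ε hε).2.1)
    (fun ε hε => (hpic ε hε).2.2)
    (hK.mono fun ε hε => by
      calc p ε * deriv w ε * h ε ^ 2 / w ε = p ε * deriv w ε / w ε * h ε ^ 2 := by ring
        _ ≤ K / ε * h ε ^ 2 := by gcongr
        _ = K * (h ε ^ 2 / ε) := by ring)
    (by simpa using hsq.const_mul K) heq
  intro x hx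
  rcases hx.1.eq_or_lt with rfl | hx0
  · exact h0
  exact eq_zero_of_ae_picone_remainder_eq_zero hppos hw1 hwpos hd h1 hQ x ⟨hx0, hx.2⟩

theorem equality_case_hardy (q : ℝ) (hq0 : 0 < q) (hq1 : q ≤ 1)
    (p w : ℝ → ℝ)
    (hp : ContinuousOn p (Set.Icc 0 1))
    (hppos : ∀ x ∈ Set.Icc (0:ℝ) 1, 0 < p x)
    (hw1 : ContDiffOn ℝ 1 w (Set.Icc 0 1))
    (hw2 : ContDiffOn ℝ 2 w (Set.Ioc 0 1))
    (hwpos : ∀ x ∈ Set.Ioc (0:ℝ) 1, 0 < w x) (hw1pos : 0 < w 1)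
    (heqw : ∀ x ∈ Set.Ioc (0:ℝ) 1,
      deriv (fun y => p y * deriv w y) x + w x / x ^ (2 - q) = 0)
    (h g : ℝ → ℝ) (h0 : h 0 = 0) (h1 : h 1 = 0)
    (hd : ∀ x ∈ Set.Icc (0:ℝ) 1, HasDerivAt h (g x) x)
    (hg : IntervalIntegrable (fun x => g x ^ 2) volume 0 1)
    (heq : (∫ x in (0:ℝ)..1, p x * g x ^ 2)
      = ∫ x in (0:ℝ)..1, h x ^ 2 / x ^ (2 - q)) :
    ∀ x ∈ Set.Icc (0:ℝ) 1, h x = 0 :=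
  equality_case_hardy_general q p w hp hppos hw1 hwpos heqw h g h0 h1 hd hg heq
end

section
/- Comparison principle (N=2): Let T > 0 and u₁, u₂ ∈ C([0,T]×[0,1]) ∩ C¹((0,T]×[0,1]) ∩ C^{1,2}((0,T]×(0,1)), with u₁(t,·), u₂(t,·) nondecreasing for t ∈ (0,T], and sup_{t∈(0,T]} t^γ ‖u_{i₀}(t)‖_{C¹} < ∞ for some i₀ ∈ {1,2} and γ < 1. If ∂ₜu₁ ≤ x·∂ₓₓu₁ + u₁·∂ₓu₁ and ∂ₜu₂ ≥ x·∂ₓₓu₂ + u₂·∂ₓu₂ on (0,T]×(0,1), with u₁ ≤ u₂ at t = 0 and at x = 0 and x = 1, then u₁ ≤ u₂ on [0,T]×[0,1]. -/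
/-!
At an interior spatial maximum of `w = u₁ - u₂` where `w > 0` we have `w_x = 0` and `w_xx ≤ 0`,
so the two differential inequalities give `w_t ≤ p w` with `p = ∂ₓu₁ = ∂ₓu₂`, and the `C¹` bound
on one of the `uᵢ` gives `p ≤ M t^(-γ)`. Since `γ < 1`, `g t = M t^(1-γ) / (1-γ)` is a continuous
primitive of `M t^(-γ)` on `[0,T]`, and `exp (-g t) * w` satisfies `∂ₜ ≤ 0` at its positive
interior maxima. The weak maximum principle, made strict by subtracting `ε t`, then bounds it by
its values on the parabolic boundary, where it is `≤ 0`.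
-/

open Real Set Filter Topology

lemma HasDerivAt.nonneg_of_le_left {f : ℝ → ℝ} {f' a t : ℝ} (hf : HasDerivAt f f' t)
    (hat : a < t) (hle : ∀ s ∈ Ioo a t, f s ≤ f t) : 0 ≤ f' := by
  have hmax : IsLocalMaxOn f (Ioc a t) t :=
    eventually_of_mem self_mem_nhdsWithin fun s hs =>
      hs.2.eq_or_lt.elim (fun h => h ▸ le_rfl) fun h => hle s ⟨hs.1, h⟩
  have hcone : a - t ∈ posTangentConeAt (Ioc a t) t :=
    sub_mem_posTangentConeAt_of_openSegment_subset (by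
      rw [openSegment_symm, openSegment_eq_Ioo hat]; exact Ioo_subset_Ioc_self)
  have := hmax.hasFDerivWithinAt_nonpos hf.hasDerivWithinAt.hasFDerivWithinAt hcone
  simp only [ContinuousLinearMap.toSpanSingleton_apply, smul_eq_mul] at this
  exact nonneg_of_mul_nonpos_right this (sub_neg.2 hat)

lemma IsLocalMax.nonpos_of_hasDerivAt_deriv {f f' : ℝ → ℝ} {x c : ℝ} (hmax : IsLocalMax f x)
    (hf : ∀ᶠ y in 𝓝 x, HasDerivAt f (f' y) y) (hf' : HasDerivAt f' c x) : c ≤ 0 := by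
  by_contra! hc
  have hflat : f' x = 0 := hmax.hasDerivAt_eq_zero hf.self_of_nhds
  have hslope : ∀ᶠ y in 𝓝[>] x, 0 < slope f' x y :=
    ((hasDerivAt_iff_tendsto_slope.1 hf').eventually (eventually_gt_nhds hc)).filter_mono
      (nhdsGT_le_nhdsNE x)
  obtain ⟨b, hxb, hb⟩ := mem_nhdsGT_iff_exists_Ioo_subset.1
    (hslope.and ((hf.and hmax).filter_mono nhdsWithin_le_nhds))
  obtain ⟨m, hxm, hmb⟩ := exists_between (show x < b from hxb)
  have hderiv : ∀ y ∈ Ioo x m, HasDerivAt f (f' y) y := fun y hy =>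
    (hb ⟨hy.1, hy.2.trans hmb⟩).2.1
  have hcont : ContinuousOn f (Icc x m) := fun y hy =>
    (hy.1.eq_or_lt.elim (fun h => h ▸ hf.self_of_nhds)
      fun h => (hb ⟨h, hy.2.trans_lt hmb⟩).2.1).continuousAt.continuousWithinAt
  obtain ⟨ξ, hξ, hfξ⟩ := exists_hasDerivAt_eq_slope f f' hxm hcont hderiv
  have hξpos : 0 < f' ξ := pos_of_slope_pos hξ.1 (hb ⟨hξ.1, hξ.2.trans hmb⟩).1 hflat
  have hfm : f m ≤ f x := (hb ⟨hxm, hmb⟩).2.2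
  rw [hfξ] at hξpos
  exact (div_pos_iff_of_pos_right (sub_pos.2 hxm)).1 hξpos |>.not_ge (sub_nonpos.2 hfm)

section MaximumPrinciple

variable {T : ℝ} {w wt : ℝ → ℝ → ℝ}

theorem nonpos_of_timeDeriv_neg_at_max
    (hc : ContinuousOn (fun p : ℝ × ℝ => w p.1 p.2) (Icc 0 T ×ˢ Icc 0 1))
    (hdt : ∀ t ∈ Ioc 0 T, ∀ x ∈ Ioo 0 1, HasDerivAt (fun s => w s x) (wt t x) t)
    (hmax : ∀ t ∈ Ioc 0 T, ∀ x ∈ Ioo 0 1, IsMaxOn (w t) (Icc 0 1) x → 0 < w t x →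
      wt t x < 0)
    (h0 : ∀ x ∈ Icc 0 1, w 0 x ≤ 0) (hleft : ∀ t ∈ Icc 0 T, w t 0 ≤ 0)
    (hright : ∀ t ∈ Icc 0 T, w t 1 ≤ 0) :
    ∀ t ∈ Icc 0 T, ∀ x ∈ Icc 0 1, w t x ≤ 0 := by
  intro t ht x hx
  by_contra! hpos
  obtain ⟨⟨t₀, x₀⟩, ⟨ht₀, hx₀⟩, hp₀⟩ :=
    (isCompact_Icc.prod isCompact_Icc).exists_isMaxOn ⟨(t, x), ht, hx⟩ hc
  replace hp₀ : ∀ s ∈ Icc 0 T, ∀ y ∈ Icc 0 1, w s y ≤ w t₀ x₀ := fun s hs y hy =>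
    isMaxOn_iff.1 hp₀ (s, y) ⟨hs, hy⟩
  have hw₀ : 0 < w t₀ x₀ := hpos.trans_le (hp₀ t ht x hx)
  have ht₀pos : 0 < t₀ :=
    ht₀.1.lt_of_ne (by rintro rfl; exact (h0 x₀ hx₀).not_gt hw₀)
  have hx₀int : x₀ ∈ Ioo 0 1 :=
    ⟨hx₀.1.lt_of_ne (by rintro rfl; exact (hleft t₀ ht₀).not_gt hw₀),
      hx₀.2.lt_of_ne (by rintro rfl; exact (hright t₀ ht₀).not_gt hw₀)⟩
  have ht₀' : t₀ ∈ Ioc 0 T := ⟨ht₀pos, ht₀.2⟩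
  refine (hmax t₀ ht₀' x₀ hx₀int (isMaxOn_iff.2 fun y hy => hp₀ t₀ ht₀ y hy) hw₀).not_ge ?_
  exact (hdt t₀ ht₀' x₀ hx₀int).nonneg_of_le_left ht₀pos
    fun s hs => hp₀ s ⟨hs.1.le, hs.2.le.trans ht₀.2⟩ x₀ hx₀

theorem nonpos_of_timeDeriv_nonpos_at_max
    (hc : ContinuousOn (fun p : ℝ × ℝ => w p.1 p.2) (Icc 0 T ×ˢ Icc 0 1))
    (hdt : ∀ t ∈ Ioc 0 T, ∀ x ∈ Ioo 0 1, HasDerivAt (fun s => w s x) (wt t x) t)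
    (hmax : ∀ t ∈ Ioc 0 T, ∀ x ∈ Ioo 0 1, IsMaxOn (w t) (Icc 0 1) x → 0 < w t x →
      wt t x ≤ 0)
    (h0 : ∀ x ∈ Icc 0 1, w 0 x ≤ 0) (hleft : ∀ t ∈ Icc 0 T, w t 0 ≤ 0)
    (hright : ∀ t ∈ Icc 0 T, w t 1 ≤ 0) :
    ∀ t ∈ Icc 0 T, ∀ x ∈ Icc 0 1, w t x ≤ 0 := by
  intro t ht x hx
  refine le_of_forall_pos_le_add fun ε hε => ?_
  have hT₁ : 0 < T + 1 := by linarith [ht.1.trans ht.2]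
  set δ := ε / (T + 1)
  have hδ : 0 < δ := div_pos hε hT₁
  have hshift := nonpos_of_timeDeriv_neg_at_max (w := fun t x => w t x - δ * t)
    (wt := fun t x => wt t x - δ)
    (hc.sub (continuous_const.mul continuous_fst).continuousOn)
    (fun t ht x hx => by
      simpa using (hdt t ht x hx).fun_sub ((hasDerivAt_id' t).const_mul δ))
    (fun t ht x hx hmax' hpos => by
      have := hmax t ht x hx (isMaxOn_iff.2 fun y hy =>
          (sub_le_sub_iff_right _).1 (isMaxOn_iff.1 hmax' y hy))
        (by nlinarith [ht.1])
      linarith)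
    (fun x hx => by simpa using h0 x hx)
    (fun t ht => by nlinarith [hleft t ht, ht.1])
    (fun t ht => by nlinarith [hright t ht, ht.1])
    t ht x hx
  have : δ * t ≤ ε := by
    calc δ * t ≤ δ * (T + 1) := by gcongr; linarith [ht.2]
      _ = ε := div_mul_cancel₀ ε hT₁.ne'
  linarith [hshift]

theorem nonpos_of_timeDeriv_le_mul_at_max {g g' : ℝ → ℝ}
    (hc : ContinuousOn (fun p : ℝ × ℝ => w p.1 p.2) (Icc 0 T ×ˢ Icc 0 1))
    (hdt : ∀ t ∈ Ioc 0 T, ∀ x ∈ Ioo 0 1, HasDerivAt (fun s => w s x) (wt t x) t)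
    (hgc : ContinuousOn g (Icc 0 T)) (hg : ∀ t ∈ Ioc 0 T, HasDerivAt g (g' t) t)
    (hmax : ∀ t ∈ Ioc 0 T, ∀ x ∈ Ioo 0 1, IsMaxOn (w t) (Icc 0 1) x → 0 < w t x →
      wt t x ≤ g' t * w t x)
    (h0 : ∀ x ∈ Icc 0 1, w 0 x ≤ 0) (hleft : ∀ t ∈ Icc 0 T, w t 0 ≤ 0)
    (hright : ∀ t ∈ Icc 0 T, w t 1 ≤ 0) :
    ∀ t ∈ Icc 0 T, ∀ x ∈ Icc 0 1, w t x ≤ 0 := by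
  intro t ht x hx
  have hweighted := nonpos_of_timeDeriv_nonpos_at_max (w := fun t x => exp (-g t) * w t x)
    (wt := fun t x => exp (-g t) * (wt t x - g' t * w t x))
    (((hgc.comp continuousOn_fst fun _ hp => hp.1).neg.rexp).mul hc)
    (fun t ht x hx =>
      (hg t ht).fun_neg.exp.fun_mul (hdt t ht x hx) |>.congr_deriv (by ring))
    (fun t ht x hx hmax' hpos => mul_nonpos_of_nonneg_of_nonpos (exp_pos _).le <|
      sub_nonpos.2 <| hmax t ht x hx (isMaxOn_iff.2 fun y hy =>
          le_of_mul_le_mul_left (isMaxOn_iff.1 hmax' y hy) (exp_pos _))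
        (pos_of_mul_pos_right hpos (exp_pos _).le))
    (fun x hx => mul_nonpos_of_nonneg_of_nonpos (exp_pos _).le (h0 x hx))
    (fun t ht => mul_nonpos_of_nonneg_of_nonpos (exp_pos _).le (hleft t ht))
    (fun t ht => mul_nonpos_of_nonneg_of_nonpos (exp_pos _).le (hright t ht))
    t ht x hx
  exact nonpos_of_mul_nonpos_right hweighted (exp_pos _)

end MaximumPrinciple

lemma timeDeriv_sub_le_of_isMaxOn {u₁ u₂ u₁x u₂x u₁xx u₂xx : ℝ → ℝ} {a₁ a₂ x : ℝ}
    (hx : x ∈ Ioo 0 1)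
    (hdx1 : ∀ y ∈ Ioo 0 1, HasDerivAt u₁ (u₁x y) y ∧ HasDerivAt u₁x (u₁xx y) y)
    (hdx2 : ∀ y ∈ Ioo 0 1, HasDerivAt u₂ (u₂x y) y ∧ HasDerivAt u₂x (u₂xx y) y)
    (hmax : IsMaxOn (fun y => u₁ y - u₂ y) (Icc 0 1) x)
    (hsub : a₁ ≤ x * u₁xx x + u₁ x * u₁x x) (hsup : x * u₂xx x + u₂ x * u₂x x ≤ a₂) :
    u₁x x = u₂x x ∧ a₁ - a₂ ≤ u₁x x * (u₁ x - u₂ x) := by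
  have hloc : IsLocalMax (fun y => u₁ y - u₂ y) x := hmax.isLocalMax (Icc_mem_nhds hx.1 hx.2)
  have hflat : u₁x x = u₂x x :=
    sub_eq_zero.1 (hloc.hasDerivAt_eq_zero ((hdx1 x hx).1.fun_sub (hdx2 x hx).1))
  have hconcave : u₁xx x - u₂xx x ≤ 0 :=
    hloc.nonpos_of_hasDerivAt_deriv (f' := fun y => u₁x y - u₂x y)
      (eventually_of_mem (Ioo_mem_nhds hx.1 hx.2) fun y hy =>
        (hdx1 y hy).1.fun_sub (hdx2 y hy).1)
      ((hdx1 x hx).2.fun_sub (hdx2 x hx).2)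
  refine ⟨hflat, ?_⟩
  rw [← hflat] at hsup
  nlinarith [mul_nonpos_of_nonneg_of_nonpos hx.1.le hconcave]

theorem comparison_principle_N2_general (T : ℝ)
    (u₁ u₂ u₁t u₂t u₁x u₂x u₁xx u₂xx : ℝ → ℝ → ℝ)
    (hc1 : ContinuousOn (fun p : ℝ × ℝ => u₁ p.1 p.2) (Set.Icc 0 T ×ˢ Set.Icc 0 1))
    (hc2 : ContinuousOn (fun p : ℝ × ℝ => u₂ p.1 p.2) (Set.Icc 0 T ×ˢ Set.Icc 0 1))
    (hdt1 : ∀ t ∈ Set.Ioc (0:ℝ) T, ∀ x ∈ Set.Icc (0:ℝ) 1,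
      HasDerivAt (fun s => u₁ s x) (u₁t t x) t)
    (hdt2 : ∀ t ∈ Set.Ioc (0:ℝ) T, ∀ x ∈ Set.Icc (0:ℝ) 1,
      HasDerivAt (fun s => u₂ s x) (u₂t t x) t)
    (hdx1 : ∀ t ∈ Set.Ioc (0:ℝ) T, ∀ x ∈ Set.Ioo (0:ℝ) 1,
      HasDerivAt (u₁ t) (u₁x t x) x ∧ HasDerivAt (u₁x t) (u₁xx t x) x)
    (hdx2 : ∀ t ∈ Set.Ioc (0:ℝ) T, ∀ x ∈ Set.Ioo (0:ℝ) 1,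
      HasDerivAt (u₂ t) (u₂x t x) x ∧ HasDerivAt (u₂x t) (u₂xx t x) x)
    (hbd : ∃ γ : ℝ, γ < 1 ∧ ∃ M : ℝ,
      (∀ t ∈ Set.Ioc (0:ℝ) T, ∀ x ∈ Set.Icc (0:ℝ) 1,
        t ^ γ * |u₁ t x| ≤ M ∧ t ^ γ * |u₁x t x| ≤ M) ∨
      (∀ t ∈ Set.Ioc (0:ℝ) T, ∀ x ∈ Set.Icc (0:ℝ) 1,
        t ^ γ * |u₂ t x| ≤ M ∧ t ^ γ * |u₂x t x| ≤ M))
    (hsub : ∀ t ∈ Set.Ioc (0:ℝ) T, ∀ x ∈ Set.Ioo (0:ℝ) 1,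
      u₁t t x ≤ x * u₁xx t x + u₁ t x * u₁x t x)
    (hsup : ∀ t ∈ Set.Ioc (0:ℝ) T, ∀ x ∈ Set.Ioo (0:ℝ) 1,
      x * u₂xx t x + u₂ t x * u₂x t x ≤ u₂t t x)
    (hinit : ∀ x ∈ Set.Icc (0:ℝ) 1, u₁ 0 x ≤ u₂ 0 x)
    (hbc0 : ∀ t ∈ Set.Icc (0:ℝ) T, u₁ t 0 ≤ u₂ t 0)
    (hbc1 : ∀ t ∈ Set.Icc (0:ℝ) T, u₁ t 1 ≤ u₂ t 1) :
    ∀ t ∈ Set.Icc (0:ℝ) T, ∀ x ∈ Set.Icc (0:ℝ) 1, u₁ t x ≤ u₂ t x := by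
  obtain ⟨γ, hγ, M, hM⟩ := hbd
  have hgrad : ∀ t ∈ Ioc 0 T, ∀ x ∈ Ioo 0 1, u₁x t x = u₂x t x →
      u₁x t x ≤ M * t ^ (-γ) := by
    intro t ht x hx hflat
    have hbound : t ^ γ * |u₁x t x| ≤ M := by
      rcases hM with h | h
      · exact (h t ht x (Ioo_subset_Icc_self hx)).2
      · exact hflat ▸ (h t ht x (Ioo_subset_Icc_self hx)).2
    have htγ := rpow_pos_of_pos ht.1 γ
    rw [rpow_neg ht.1.le, ← div_eq_mul_inv, le_div_iff₀ htγ]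
    nlinarith [le_abs_self (u₁x t x)]
  intro t ht x hx
  refine sub_nonpos.1 <| nonpos_of_timeDeriv_le_mul_at_max
    (w := fun t x => u₁ t x - u₂ t x) (wt := fun t x => u₁t t x - u₂t t x)
    (g := fun t => M / (1 - γ) * t ^ (1 - γ)) (g' := fun t => M * t ^ (-γ))
    (hc1.sub hc2)
    (fun t ht x hx => (hdt1 t ht x (Ioo_subset_Icc_self hx)).fun_sub
      (hdt2 t ht x (Ioo_subset_Icc_self hx)))
    (continuous_const.mul (continuous_rpow_const (sub_pos.2 hγ).le)).continuousOn
    (fun t ht => ((hasDerivAt_rpow_const (Or.inl ht.1.ne')).const_mul (M / (1 - γ))).congr_deriv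
      (by rw [sub_sub_cancel_left]; field_simp [(sub_pos.2 hγ).ne']))
    ?_ (fun x hx => sub_nonpos.2 (hinit x hx)) (fun t ht => sub_nonpos.2 (hbc0 t ht))
    (fun t ht => sub_nonpos.2 (hbc1 t ht)) t ht x hx
  intro t ht x hx hmax hpos
  obtain ⟨hflat, hle⟩ := timeDeriv_sub_le_of_isMaxOn hx (hdx1 t ht) (hdx2 t ht) hmax
    (hsub t ht x hx) (hsup t ht x hx)
  exact hle.trans (mul_le_mul_of_nonneg_right (hgrad t ht x hx hflat) hpos.le)

theorem comparison_principle_N2 (T : ℝ) (hT : 0 < T)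
    (u₁ u₂ u₁t u₂t u₁x u₂x u₁xx u₂xx : ℝ → ℝ → ℝ)
    (hc1 : ContinuousOn (fun p : ℝ × ℝ => u₁ p.1 p.2) (Set.Icc 0 T ×ˢ Set.Icc 0 1))
    (hc2 : ContinuousOn (fun p : ℝ × ℝ => u₂ p.1 p.2) (Set.Icc 0 T ×ˢ Set.Icc 0 1))
    (hcx1 : ContinuousOn (fun p : ℝ × ℝ => u₁x p.1 p.2) (Set.Ioc 0 T ×ˢ Set.Icc 0 1))
    (hcx2 : ContinuousOn (fun p : ℝ × ℝ => u₂x p.1 p.2) (Set.Ioc 0 T ×ˢ Set.Icc 0 1))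
    (hdt1 : ∀ t ∈ Set.Ioc (0:ℝ) T, ∀ x ∈ Set.Icc (0:ℝ) 1,
      HasDerivAt (fun s => u₁ s x) (u₁t t x) t)
    (hdt2 : ∀ t ∈ Set.Ioc (0:ℝ) T, ∀ x ∈ Set.Icc (0:ℝ) 1,
      HasDerivAt (fun s => u₂ s x) (u₂t t x) t)
    (hdx1 : ∀ t ∈ Set.Ioc (0:ℝ) T, ∀ x ∈ Set.Ioo (0:ℝ) 1,
      HasDerivAt (u₁ t) (u₁x t x) x ∧ HasDerivAt (u₁x t) (u₁xx t x) x)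
    (hdx2 : ∀ t ∈ Set.Ioc (0:ℝ) T, ∀ x ∈ Set.Ioo (0:ℝ) 1,
      HasDerivAt (u₂ t) (u₂x t x) x ∧ HasDerivAt (u₂x t) (u₂xx t x) x)
    (hmono1 : ∀ t ∈ Set.Ioc (0:ℝ) T, MonotoneOn (u₁ t) (Set.Icc 0 1))
    (hmono2 : ∀ t ∈ Set.Ioc (0:ℝ) T, MonotoneOn (u₂ t) (Set.Icc 0 1))
    (hbd : ∃ γ : ℝ, γ < 1 ∧ ∃ M : ℝ,
      (∀ t ∈ Set.Ioc (0:ℝ) T, ∀ x ∈ Set.Icc (0:ℝ) 1,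
        t ^ γ * |u₁ t x| ≤ M ∧ t ^ γ * |u₁x t x| ≤ M) ∨
      (∀ t ∈ Set.Ioc (0:ℝ) T, ∀ x ∈ Set.Icc (0:ℝ) 1,
        t ^ γ * |u₂ t x| ≤ M ∧ t ^ γ * |u₂x t x| ≤ M))
    (hsub : ∀ t ∈ Set.Ioc (0:ℝ) T, ∀ x ∈ Set.Ioo (0:ℝ) 1,
      u₁t t x ≤ x * u₁xx t x + u₁ t x * u₁x t x)
    (hsup : ∀ t ∈ Set.Ioc (0:ℝ) T, ∀ x ∈ Set.Ioo (0:ℝ) 1,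
      x * u₂xx t x + u₂ t x * u₂x t x ≤ u₂t t x)
    (hinit : ∀ x ∈ Set.Icc (0:ℝ) 1, u₁ 0 x ≤ u₂ 0 x)
    (hbc0 : ∀ t ∈ Set.Icc (0:ℝ) T, u₁ t 0 ≤ u₂ t 0)
    (hbc1 : ∀ t ∈ Set.Icc (0:ℝ) T, u₁ t 1 ≤ u₂ t 1) :
    ∀ t ∈ Set.Icc (0:ℝ) T, ∀ x ∈ Set.Icc (0:ℝ) 1, u₁ t x ≤ u₂ t x :=
  comparison_principle_N2_general T u₁ u₂ u₁t u₂t u₁x u₂x u₁xx u₂xx hc1 hc2 hdt1 hdt2 hdx1 hdx2 hbd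
    hsub hsup hinit hbc0 hbc1
end

section
/- For N=2 and 0 < m < 2: if u₀ ∈ C([0,1]) is nondecreasing, differentiable at 0, with u₀(0)=0, u₀(1)=m, and sup_{x∈(0,1]} u₀(x)/x ≤ K, then u₀(x) ≤ U_{a₀}(x) for all x ∈ [0,1], where a₀ = K/(1 − m/2) and U_{a₀}(x) = a₀·x/(1 + a₀·x/2). -/
open Real Set

/-! `U a` is concave and increasing on `[0, ∞)` with `U a 0 = 0`, and `a₀ = K / (1 - m/2)` is chosen so
that `U a₀ (m/K) = m`. On `[0, m/K]` the graph of `U a₀` lies above its chord, the line `K x`, which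
bounds `u₀` by the slope hypothesis; on `[m/K, 1]` monotonicity gives `u₀ ≤ m ≤ U a₀`. -/

noncomputable def U (a x : ℝ) : ℝ := a * x / (1 + a * x / 2)

theorem U_monotoneOn {a : ℝ} (ha : 0 ≤ a) : MonotoneOn (U a) (Ici 0) := by
  intro x hx y hy hxy
  have hx' : 0 < 1 + a * x / 2 := by linarith [mul_nonneg ha hx]
  have hy' : 0 < 1 + a * y / 2 := by linarith [mul_nonneg ha hy]
  rw [U, U, div_le_div_iff₀ hx' hy']
  nlinarith [mul_le_mul_of_nonneg_left hxy ha]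

/-- Concavity of `U a` in chord form: `U a x / x` is nonincreasing. -/
theorem U_mul_le_U_mul {a x y : ℝ} (ha : 0 ≤ a) (hx : 0 ≤ x) (hxy : x ≤ y) :
    U a y * x ≤ U a x * y := by
  have hx' : 0 < 1 + a * x / 2 := by linarith [mul_nonneg ha hx]
  have hy' : 0 < 1 + a * y / 2 := by linarith [mul_nonneg ha (hx.trans hxy)]
  rw [U, U, div_mul_eq_mul_div, div_mul_eq_mul_div, div_le_div_iff₀ hy' hx']
  have : 0 ≤ a * x * y * (a * (y - x)) :=
    mul_nonneg (mul_nonneg (mul_nonneg ha hx) (hx.trans hxy)) (mul_nonneg ha (sub_nonneg.mpr hxy))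
  nlinarith

theorem U_div_one_sub_half_div {m K : ℝ} (hK : K ≠ 0) (hm : m < 2) :
    U (K / (1 - m / 2)) (m / K) = m := by
  have : 2 - m ≠ 0 := by linarith
  have : 1 - m / 2 ≠ 0 := by linarith
  rw [U]
  field_simp
  ring

theorem supersolution_bound_N2_general (m K : ℝ) (hm0 : 0 < m) (hm2 : m < 2)
    (u₀ : ℝ → ℝ) (hmono : MonotoneOn u₀ (Set.Icc 0 1))
    (h0 : u₀ 0 = 0) (h1 : u₀ 1 = m)
    (hK : ∀ x ∈ Set.Ioc (0:ℝ) 1, u₀ x / x ≤ K) :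
    ∀ x ∈ Set.Icc (0:ℝ) 1,
      u₀ x ≤ (K / (1 - m / 2)) * x / (1 + (K / (1 - m / 2)) * x / 2) := by
  have hmK : m ≤ K := by simpa [h1] using hK 1 ⟨one_pos, le_rfl⟩
  have hKpos : 0 < K := hm0.trans_le hmK
  set a := K / (1 - m / 2)
  have ha : 0 ≤ a := div_nonneg hKpos.le (by linarith)
  set x₀ := m / K with hx₀_def
  have hx₀ : 0 < x₀ := div_pos hm0 hKpos
  have hUx₀ : U a x₀ = m := U_div_one_sub_half_div hKpos.ne' hm2
  intro x ⟨hx0, hx1⟩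
  change u₀ x ≤ U a x
  rcases le_total x x₀ with hxx₀ | hx₀x
  · have hu₀ : u₀ x ≤ K * x := by
      rcases hx0.eq_or_lt with rfl | hxpos
      · simp [h0]
      · exact (div_le_iff₀ hxpos).mp (hK x ⟨hxpos, hx1⟩)
    have hchord : K * x * x₀ ≤ U a x * x₀ := by
      calc K * x * x₀ = U a x₀ * x := by rw [hUx₀, hx₀_def]; field_simp
        _ ≤ U a x * x₀ := U_mul_le_U_mul ha hx0 hxx₀
    exact hu₀.trans (le_of_mul_le_mul_right hchord hx₀)
  · calc u₀ x ≤ u₀ 1 := hmono ⟨hx0, hx1⟩ ⟨zero_le_one, le_rfl⟩ hx1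
      _ = U a x₀ := by rw [h1, hUx₀]
      _ ≤ U a x := U_monotoneOn ha hx₀.le (hx₀.le.trans hx₀x) hx₀x

theorem supersolution_bound_N2 (m K : ℝ) (hm0 : 0 < m) (hm2 : m < 2)
    (u₀ : ℝ → ℝ) (hmono : MonotoneOn u₀ (Set.Icc 0 1))
    (hcont : ContinuousOn u₀ (Set.Icc 0 1))
    (hdiff : ∃ d : ℝ, HasDerivWithinAt u₀ d (Set.Icc 0 1) 0)
    (h0 : u₀ 0 = 0) (h1 : u₀ 1 = m)
    (hK : ∀ x ∈ Set.Ioc (0:ℝ) 1, u₀ x / x ≤ K) :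
    ∀ x ∈ Set.Icc (0:ℝ) 1,
      u₀ x ≤ (K / (1 - m / 2)) * x / (1 + (K / (1 - m / 2)) * x / 2) :=
  supersolution_bound_N2_general m K hm0 hm2 u₀ hmono h0 h1 hK
end
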